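/- arXiv:1405.7683 — 3 statements merged into one kernel-verified Lean document; each statement's English description precedes it below -/
import Mathlib

section
/- Define B₁(c) = √(2 + c) + 2 and B₂(c) = (5 + √(4c − 3))/2 for a real variable c. Then for every real c ≥ 2, the difference satisfies |B₁(c) − B₂(c)| < 1/2. -/
/-- `B₁ c = √(2 + c) + 2`. -/
noncomputable def B₁ (c : ℝ) : ℝ := Real.sqrt (2 + c) + 2

/-- `B₂ c = (5 + √(4c − 3))/2`. -/
noncomputable def B₂ (c : ℝ) : ℝ := (5 + Real.sqrt (4 * c - 3)) / 2

/-- For every real `c ≥ 2`, `|B₁ c − B₂ c| < 1/2`. -/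
theorem abs_B₁_sub_B₂_lt_half (c : ℝ) (hc : 2 ≤ c) : |B₁ c - B₂ c| < 1 / 2 := by
  unfold B₁ B₂
  set a := Real.sqrt (2 + c) with ha
  set b := Real.sqrt (4 * c - 3) with hb
  have ha2 : a ^ 2 = 2 + c := Real.sq_sqrt (by linarith)
  have hb2 : b ^ 2 = 4 * c - 3 := Real.sq_sqrt (by linarith)
  have ha0 := Real.sqrt_nonneg (2 + c)
  have hb0 := Real.sqrt_nonneg (4 * c - 3)
  have ha1 : 2 ≤ a := by nlinarith
  have hb1 : 2 ≤ b := by nlinarith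
  rw [abs_lt]
  constructor <;> nlinarith [sq_nonneg (2*a - b), sq_nonneg (2*a + b), mul_nonneg (mul_nonneg ha0 hb0) hb0]
end

section
/- Define B₁(c) = √(2 + c) + 2 and B₂(c) = (5 + √(4c − 3))/2 for a real variable c. Then |B₁(c) − B₂(c)| tends to 1/2 as c tends to infinity. -/
open Filter

lemma sqrt_diff_tendsto_zero :
    Tendsto (fun c : ℝ => Real.sqrt (2 + c) - Real.sqrt (c - 3/4)) atTop (nhds 0) := by
  have hup : Tendsto (fun c : ℝ => (11/4) / Real.sqrt (c - 3/4)) atTop (nhds 0) := by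
    apply Tendsto.div_atTop tendsto_const_nhds
    have hs : Tendsto Real.sqrt atTop atTop := by
      apply tendsto_atTop_atTop.mpr
      intro b
      refine ⟨b^2, fun a ha => ?_⟩
      calc b ≤ |b| := le_abs_self b
        _ = Real.sqrt (b^2) := (Real.sqrt_sq_eq_abs b).symm
        _ ≤ Real.sqrt a := Real.sqrt_le_sqrt ha
    exact hs.comp (tendsto_atTop_add_const_right _ _ tendsto_id)
  refine squeeze_zero' ?_ ?_ hup
  · filter_upwards [eventually_ge_atTop (3/4 : ℝ)] with c hc
    have : c - 3/4 ≤ 2 + c := by linarith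
    have := Real.sqrt_le_sqrt this
    linarith
  · filter_upwards [eventually_ge_atTop (1 : ℝ)] with c hc
    have hb : (0:ℝ) < c - 3/4 := by linarith
    have hsb : 0 < Real.sqrt (c - 3/4) := Real.sqrt_pos.mpr hb
    rw [le_div_iff₀ hsb]
    have h1 : Real.sqrt (2 + c) ^ 2 = 2 + c := Real.sq_sqrt (by linarith)
    have h2 : Real.sqrt (c - 3/4) ^ 2 = c - 3/4 := Real.sq_sqrt hb.le
    nlinarith [sq_nonneg (Real.sqrt (2 + c) - Real.sqrt (c - 3/4)), Real.sqrt_nonneg (2 + c)]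

/-- `|B₁ c − B₂ c|` tends to `1/2` as `c` tends to infinity. -/
theorem tendsto_abs_B₁_sub_B₂_atTop_nhds_half :
    Filter.Tendsto (fun c : ℝ => |B₁ c - B₂ c|) Filter.atTop (nhds (1 / 2)) := by
  have heq : ∀ c : ℝ, B₁ c - B₂ c =
      (Real.sqrt (2 + c) - Real.sqrt (c - 3/4)) - 1/2 := by
    intro c
    have h4 : (4:ℝ) * c - 3 = 4 * (c - 3/4) := by ring
    have : Real.sqrt (4 * c - 3) = 2 * Real.sqrt (c - 3/4) := by
      rw [h4, Real.sqrt_mul (by norm_num : (0:ℝ) ≤ 4),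
        show (4:ℝ) = 2^2 by norm_num, Real.sqrt_sq (by norm_num : (0:ℝ) ≤ 2)]
    rw [B₁, B₂, this]; ring
  simp only [heq]
  have h : Tendsto (fun c : ℝ => (Real.sqrt (2 + c) - Real.sqrt (c - 3/4)) - 1/2)
      atTop (nhds (0 - 1/2)) := sqrt_diff_tendsto_zero.sub_const _
  have habs := h.abs
  rw [show |(0:ℝ) - 1/2| = 1/2 by norm_num] at habs
  exact habs
end

section
/- Every simple closed loop on the square lattice has at least 4 corners: let k ≥ 3 be a natural number and let f : ZMod k → ℤ × ℤ be an injective map such that for every i, the step f(i + 1) − f(i) lies in {(1,0), (−1,0), (0,1), (0,−1)}. Then there are at least 4 indices i ∈ ZMod k at which the direction changes, i.e. f(i + 1) − f(i) ≠ f(i) − f(i − 1). -/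
/-!
Write `g i = f (i + 1) - f i` for the steps of the loop. They sum to zero, and injectivity of `f`
(with `k ≥ 3`) forbids a step followed by its opposite. Each unit direction `d` then occurs among
the steps: otherwise every step has non-positive inner product with `d`, and since these products
sum to zero all steps are perpendicular to `d`; a loop along a single line without backtracking is
constant, so its steps sum to `k • g 0 ≠ 0`. As the opposite direction `-d` occurs too, the steps
switch to `d` at some index `m`, which is then a corner with outgoing step `d`. The four directions
give four distinct corners.
-/

theorem ZMod.exists_and_not_sub_one {k : ℕ} [NeZero k] {p : ZMod k → Prop} {i j : ZMod k}
    (hi : p i) (hj : ¬ p j) : ∃ m, p m ∧ ¬ p (m - 1) := by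
  by_contra! h
  have hback : ∀ n : ℕ, p (i - n) := by
    intro n
    induction n with
    | zero => simpa using hi
    | succ n ih => simpa [sub_add_eq_sub_sub] using h _ ih
  exact hj (by simpa using hback (i - j).val)

namespace SquareLattice

section Steps

variable {k : ℕ} {G : Type*}

def step [Sub G] (f : ZMod k → G) (i : ZMod k) : G := f (i + 1) - f i

def NoBacktrack [Neg G] (g : ZMod k → G) : Prop := ∀ i, g (i + 1) ≠ -g i

theorem step_sub_one [AddGroup G] (f : ZMod k → G) (i : ZMod k) :
    step f (i - 1) = f i - f (i - 1) := by
  rw [step, sub_add_cancel]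

theorem sum_step [NeZero k] [AddCommGroup G] (f : ZMod k → G) : ∑ i, step f i = 0 := by
  have hshift : ∑ i, f (i + 1) = ∑ i, f i := Fintype.sum_equiv (Equiv.addRight 1) _ _ fun _ ↦ rfl
  simp only [step, Finset.sum_sub_distrib, hshift, sub_self]

theorem noBacktrack_step [AddCommGroup G] (hk : 3 ≤ k) {f : ZMod k → G}
    (hf : Function.Injective f) : NoBacktrack (step f) := by
  intro i h
  have hret : f (i + 1 + 1) = f i := by
    have hsplit : f (i + 1 + 1) - f i = step f (i + 1) + step f i := by
      simp only [step, sub_add_sub_cancel]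
    rw [← sub_eq_zero, hsplit, h, neg_add_cancel]
  have htwo : ((2 : ℕ) : ZMod k) = 0 := by
    have hcycle := hf hret
    push_cast
    linear_combination hcycle
  have := Nat.le_of_dvd two_pos ((ZMod.natCast_eq_zero_iff 2 k).mp htwo)
  omega

theorem NoBacktrack.eq_apply_zero [NeZero k] [AddGroup G] {g : ZMod k → G} (hg : NoBacktrack g)
    {c : G} (hc : ∀ i, g i = c ∨ g i = -c) (i : ZMod k) : g i = g 0 := by
  by_contra hi
  obtain ⟨m, hm, hm'⟩ := ZMod.exists_and_not_sub_one (p := (g · = g 0)) rfl hi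
  apply hg (m - 1)
  rw [sub_add_cancel, hm]
  rcases hc 0 with h0 | h0 <;> rcases hc (m - 1) with h1 | h1 <;> simp_all

end Steps

def unitSteps : Set (ℤ × ℤ) := {(1, 0), (-1, 0), (0, 1), (0, -1)}

def dot (u v : ℤ × ℤ) : ℤ := u.1 * v.1 + u.2 * v.2

theorem ncard_unitSteps : unitSteps.ncard = 4 := by
  rw [unitSteps, Set.ncard_eq_toFinset_card']
  rfl

theorem neg_mem_unitSteps {d : ℤ × ℤ} (hd : d ∈ unitSteps) : -d ∈ unitSteps := by
  rcases hd with rfl | rfl | rfl | rfl <;> simp [unitSteps]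

theorem ne_zero_of_mem_unitSteps {d : ℤ × ℤ} (hd : d ∈ unitSteps) : d ≠ 0 := by
  rcases hd with rfl | rfl | rfl | rfl <;> simp

theorem neg_ne_self_of_mem_unitSteps {d : ℤ × ℤ} (hd : d ∈ unitSteps) : -d ≠ d := by
  rcases hd with rfl | rfl | rfl | rfl <;> simp

theorem dot_nonpos_of_ne {d u : ℤ × ℤ} (hd : d ∈ unitSteps) (hu : u ∈ unitSteps) (h : u ≠ d) :
    dot d u ≤ 0 := by
  rcases hd with rfl | rfl | rfl | rfl <;> rcases hu with rfl | rfl | rfl | rfl <;>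
    simp_all [dot]

theorem eq_or_eq_neg_of_dot_eq_zero {d u : ℤ × ℤ} (hd : d ∈ unitSteps) (hu : u ∈ unitSteps)
    (h : dot d u = 0) : u = (-d.2, d.1) ∨ u = -(-d.2, d.1) := by
  rcases hd with rfl | rfl | rfl | rfl <;> rcases hu with rfl | rfl | rfl | rfl <;>
    simp_all [dot]

theorem sum_dot {ι : Type*} (s : Finset ι) (d : ℤ × ℤ) (g : ι → ℤ × ℤ) :
    ∑ i ∈ s, dot d (g i) = dot d (∑ i ∈ s, g i) := by
  simp only [dot, Prod.fst_sum, Prod.snd_sum, Finset.mul_sum, Finset.sum_add_distrib]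

variable {k : ℕ} [NeZero k] {g : ZMod k → ℤ × ℤ}

theorem exists_eq_of_sum_eq_zero (hunit : ∀ i, g i ∈ unitSteps) (hsum : ∑ i, g i = 0)
    (hg : NoBacktrack g) {d : ℤ × ℤ} (hd : d ∈ unitSteps) : ∃ i, g i = d := by
  by_contra! hne
  have hperp : ∀ i, dot d (g i) = 0 := by
    have hdot : ∑ i, dot d (g i) = 0 := by rw [sum_dot, hsum]; simp [dot]
    intro i
    exact (Finset.sum_eq_zero_iff_of_nonpos fun j _ ↦
      dot_nonpos_of_ne hd (hunit j) (hne j)).mp hdot i (Finset.mem_univ i)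
  have hconst := hg.eq_apply_zero fun i ↦ eq_or_eq_neg_of_dot_eq_zero hd (hunit i) (hperp i)
  have hsum_const : k • g 0 = 0 := by
    rw [← hsum, Finset.sum_congr rfl fun i _ ↦ hconst i, Finset.sum_const, Finset.card_univ,
      ZMod.card]
  rcases smul_eq_zero.mp hsum_const with h | h
  · exact NeZero.ne k h
  · exact ne_zero_of_mem_unitSteps (hunit 0) h

theorem four_le_ncard_corners (hunit : ∀ i, g i ∈ unitSteps) (hsum : ∑ i, g i = 0)
    (hg : NoBacktrack g) : 4 ≤ {m | g m ≠ g (m - 1)}.ncard := by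
  have hsub : unitSteps ⊆ g '' {m | g m ≠ g (m - 1)} := by
    intro d hd
    obtain ⟨i, hi⟩ := exists_eq_of_sum_eq_zero hunit hsum hg hd
    obtain ⟨j, hj⟩ := exists_eq_of_sum_eq_zero hunit hsum hg (neg_mem_unitSteps hd)
    obtain ⟨m, hm, hm'⟩ := ZMod.exists_and_not_sub_one (p := (g · = d)) hi
      (by rw [hj]; exact neg_ne_self_of_mem_unitSteps hd)
    exact ⟨m, by rw [Set.mem_ofPred_eq, hm]; exact Ne.symm hm', hm⟩
  calc 4 = unitSteps.ncard := ncard_unitSteps.symm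
    _ ≤ (g '' {m | g m ≠ g (m - 1)}).ncard := Set.ncard_le_ncard hsub (Set.toFinite _)
    _ ≤ {m | g m ≠ g (m - 1)}.ncard := Set.ncard_image_le (Set.toFinite _)

end SquareLattice

/-- Every simple closed loop on the square lattice has at least 4 corners:
if `k ≥ 3` and `f : ZMod k → ℤ × ℤ` is injective with every consecutive step
a unit step, then there are at least 4 indices at which the direction
changes. -/
theorem lattice_loop_four_corners (k : ℕ) (hk : 3 ≤ k) (f : ZMod k → ℤ × ℤ)
    (hinj : Function.Injective f)
    (hstep : ∀ i : ZMod k,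
      f (i + 1) - f i ∈ ({(1, 0), (-1, 0), (0, 1), (0, -1)} : Set (ℤ × ℤ))) :
    4 ≤ {i : ZMod k | f (i + 1) - f i ≠ f i - f (i - 1)}.ncard := by
  have : NeZero k := ⟨by omega⟩
  have hcorners : {i : ZMod k | f (i + 1) - f i ≠ f i - f (i - 1)} =
      {m | SquareLattice.step f m ≠ SquareLattice.step f (m - 1)} := by
    simp only [SquareLattice.step_sub_one]
    rfl
  rw [hcorners]
  exact SquareLattice.four_le_ncard_corners hstep (SquareLattice.sum_step f)
    (SquareLattice.noBacktrack_step hk hinj)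
end
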